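/- Every product K_1 K_2 ⋯ K_n with each K_i ∈ {A_4, A_4ᵀ, A_5, A_6} has nonnegative trace. -/
import Mathlib

open Matrix

def Pinv (M : Matrix (Fin 2) (Fin 2) ℤ) : Prop :=
  0 ≤ M 0 0 + M 0 1 + M 1 0 + M 1 1 ∧
  0 ≤ M 0 0 - M 0 1 + M 1 0 - M 1 1 ∧
  0 ≤ M 0 0 + M 0 1 - M 1 0 - M 1 1 ∧
  0 ≤ M 0 0 - M 0 1 - M 1 0 + M 1 1

lemma Pinv_prod (L : List (Matrix (Fin 2) (Fin 2) ℤ))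
    (hL : ∀ K ∈ L, K = !![3, 2; -2, -1] ∨ K = !![3, -2; 2, -1] ∨
          K = !![5, 2; 2, 1] ∨ K = !![5, -2; -2, 1]) :
    Pinv L.prod := by
  induction L with
  | nil =>
    simp only [List.prod_nil]
    refine ⟨?_, ?_, ?_, ?_⟩ <;> simp [Matrix.one_apply]
  | cons K T ih =>
    have hK := hL K (by simp)
    have hT : Pinv T.prod := ih (fun K hK => hL K (by simp [hK]))
    obtain ⟨h1, h2, h3, h4⟩ := hT
    rw [List.prod_cons]
    rcases hK with h | h | h | h <;> subst h <;>
      refine ⟨?_, ?_, ?_, ?_⟩ <;>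
      simp [Matrix.mul_apply, Fin.sum_univ_two] <;> linarith

/-- Every product (including the empty product) of matrices from
{A₄, A₄ᵀ, A₅, A₆} has nonnegative trace. -/
theorem stmt_8 (L : List (Matrix (Fin 2) (Fin 2) ℤ))
    (hL : ∀ K ∈ L, K = !![3, 2; -2, -1] ∨ K = !![3, -2; 2, -1] ∨
          K = !![5, 2; 2, 1] ∨ K = !![5, -2; -2, 1]) :
    0 ≤ Matrix.trace L.prod := by
  obtain ⟨h1, h2, h3, h4⟩ := Pinv_prod L hL
  rw [Matrix.trace_fin_two]
  linarith
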